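/- (Expressivity Theorem, total variation case.) Fix a state s, a finite action set 𝒜, weights w_i(s) summing to 1, component distributions π_i^s on 𝒜 and mixture π̄^s := Σ_i w_i(s) π_i^s. Then the TV divergence D_TV(Z|s) := Σ_i w_i(s) TV(π_i^s, π̄^s)² satisfies D_TV(Z|s) ≤ (1/2) I(A; Z | S = s). Consequently, if additionally I(A; Z | Ỹ, S = s) = 0 for every s, then E_{S∼d_π}[D_TV(Z|S)] ≤ (1/2) I(A; Z | S) ≤ (1/2) I(A; Ỹ | S). -/

import Mathlib

open scoped BigOperators

set_option linter.unusedSectionVars false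
set_option linter.unusedVariables false

section Expressivity

variable {σ α ζ υ : Type} [Fintype σ] [Fintype α] [Fintype ζ] [Fintype υ]

/-- Mutual information of a finitely supported joint pmf `q` on `X × Y`. -/
noncomputable def mi {X Y : Type} [Fintype X] [Fintype Y] (q : X → Y → ℝ) : ℝ :=
  ∑ x, ∑ y, q x y * Real.log (q x y / ((∑ y', q x y') * (∑ x', q x' y)))

/-- Marginal `P(S = s)` of a joint pmf `p` on `S × A × Z × Ỹ`. -/
noncomputable def pS (p : σ → α → ζ → υ → ℝ) (s : σ) : ℝ :=
  ∑ a, ∑ z, ∑ y, p s a z y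

/-- The weight `w_i(s) = P(Z = i | S = s)`. -/
noncomputable def wZ (p : σ → α → ζ → υ → ℝ) (s : σ) (z : ζ) : ℝ :=
  (∑ a, ∑ y, p s a z y) / pS p s

/-- The component distribution `π_i^s(a) = P(A = a | Z = i, S = s)`. -/
noncomputable def piComp (p : σ → α → ζ → υ → ℝ) (s : σ) (z : ζ) (a : α) : ℝ :=
  (∑ y, p s a z y) / (∑ a', ∑ y, p s a' z y)

/-- The mixture `π̄^s(a) = ∑_i w_i(s) π_i^s(a)`. -/
noncomputable def piBar (p : σ → α → ζ → υ → ℝ) (s : σ) (a : α) : ℝ :=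
  ∑ z, wZ p s z * piComp p s z a

/-- `I(A; Z | S = s) = ∑_i w_i(s) D_KL(π_i^s ‖ π̄^s)`. -/
noncomputable def miAZ (p : σ → α → ζ → υ → ℝ) (s : σ) : ℝ :=
  ∑ z, wZ p s z * ∑ a, piComp p s z a * Real.log (piComp p s z a / piBar p s a)

/-- `I(A; Ỹ | S = s)`. -/
noncomputable def miAY (p : σ → α → ζ → υ → ℝ) (s : σ) : ℝ :=
  mi fun a y => (∑ z, p s a z y) / pS p s

/-- `I(A; Z | Ỹ, S = s) = ∑_y P(Ỹ = y | S = s) · I(A; Z | Ỹ = y, S = s)`. -/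
noncomputable def miAZgY (p : σ → α → ζ → υ → ℝ) (s : σ) : ℝ :=
  ∑ y, ((∑ a, ∑ z, p s a z y) / pS p s) *
    mi fun a z => p s a z y / (∑ a', ∑ z', p s a' z' y)

/-- The total variation distance `TV(π_i^s, π̄^s) = (1/2) ∑_a |π_i^s(a) − π̄^s(a)|`. -/
noncomputable def tvComp (p : σ → α → ζ → υ → ℝ) (s : σ) (z : ζ) : ℝ :=
  (1 / 2) * ∑ a, |piComp p s z a - piBar p s a|

/-- The TV divergence `D_TV(Z|s) = ∑_i w_i(s) TV(π_i^s, π̄^s)²`. -/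
noncomputable def DTV (p : σ → α → ζ → υ → ℝ) (s : σ) : ℝ :=
  ∑ z, wZ p s z * tvComp p s z ^ 2

/-- pointwise Gibbs: `x - y ≤ x * log (x/y)` under abs. continuity. -/
lemma gibbs_pt {x y : ℝ} (hx : 0 ≤ x) (hy : 0 ≤ y) (h : x ≠ 0 → y ≠ 0) :
    x - y ≤ x * Real.log (x / y) := by
  rcases eq_or_lt_of_le hx with hx0 | hx0
  · simp [← hx0]; linarith
  · have hy0 : 0 < y := lt_of_le_of_ne hy (Ne.symm (h hx0.ne'))
    have hyx : 0 < y / x := by positivity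
    have := Real.log_le_sub_one_of_pos hyx
    have hlog : Real.log (x / y) = - Real.log (y / x) := by
      rw [← Real.log_inv]; congr 1; field_simp
    rw [hlog]
    have h2 : x * (y / x - 1) = y - x := by field_simp
    nlinarith [mul_le_mul_of_nonneg_left this hx]

lemma gibbs_sum {ι : Type*} [Fintype ι] (f g : ι → ℝ) (hf : ∀ i, 0 ≤ f i) (hg : ∀ i, 0 ≤ g i)
    (h : ∀ i, f i ≠ 0 → g i ≠ 0) (hsum : ∑ i, g i ≤ ∑ i, f i) :
    0 ≤ ∑ i, f i * Real.log (f i / g i) := by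
  have : ∑ i, (f i - g i) ≤ ∑ i, f i * Real.log (f i / g i) :=
    Finset.sum_le_sum fun i _ => gibbs_pt (hf i) (hg i) (h i)
  rw [Finset.sum_sub_distrib] at this
  linarith

private noncomputable def kfun (x : ℝ) : ℝ := (x+1) * Real.log x - 2*(x-1)

private lemma kfun_deriv {x : ℝ} (hx : 0 < x) :
    HasDerivAt kfun (Real.log x + 1/x - 1) x := by
  have h1 : HasDerivAt (fun x : ℝ => (x+1) * Real.log x)
      (1 * Real.log x + (x+1) * x⁻¹) x :=
    ((hasDerivAt_id x).add_const 1).mul (Real.hasDerivAt_log hx.ne')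
  have h2 : HasDerivAt (fun x : ℝ => 2*(x-1)) 2 x := by
    simpa using ((hasDerivAt_id x).sub_const 1).const_mul 2
  have := h1.sub h2
  refine this.congr_deriv ?_
  rw [add_mul, mul_inv_cancel₀ hx.ne']
  ring

private lemma kfun_deriv_nonneg {x : ℝ} (hx : 0 < x) : 0 ≤ Real.log x + 1/x - 1 := by
  have h := Real.log_le_sub_one_of_pos (show (0:ℝ) < x⁻¹ by positivity)
  rw [Real.log_inv] at h
  have : (x:ℝ)⁻¹ = 1/x := by field_simp
  linarith [this ▸ h]

private lemma kfun_mono {a b : ℝ} (ha : 0 < a) : MonotoneOn kfun (Set.Icc a b) := by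
  apply monotoneOn_of_deriv_nonneg (convex_Icc a b)
  · intro t ht
    exact (kfun_deriv (lt_of_lt_of_le ha ht.1)).differentiableAt.continuousAt.continuousWithinAt
  · intro t ht
    rw [interior_Icc] at ht
    exact (kfun_deriv (lt_of_lt_of_le ha ht.1.le)).differentiableAt.differentiableWithinAt
  · intro t ht
    rw [interior_Icc] at ht
    have h0 : 0 < t := lt_of_lt_of_le ha ht.1.le
    rw [(kfun_deriv h0).deriv]
    exact kfun_deriv_nonneg h0

private lemma kfun_one : kfun 1 = 0 := by simp [kfun]

private lemma kfun_nonneg {x : ℝ} (hx : 1 ≤ x) : 0 ≤ kfun x := by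
  have := kfun_mono (a := 1) (b := x) one_pos (Set.left_mem_Icc.2 hx)
    (Set.right_mem_Icc.2 hx) hx
  rwa [kfun_one] at this

private lemma kfun_nonpos {x : ℝ} (hx0 : 0 < x) (hx : x ≤ 1) : kfun x ≤ 0 := by
  have := kfun_mono (a := x) (b := 1) hx0 (Set.left_mem_Icc.2 hx)
    (Set.right_mem_Icc.2 hx) hx
  rwa [kfun_one] at this

private noncomputable def hfun (x : ℝ) : ℝ :=
  (2*x+4) * (x * Real.log x - x + 1) - 3*(x-1)^2

private lemma hfun_deriv {x : ℝ} (hx : 0 < x) : HasDerivAt hfun (4 * kfun x) x := by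
  have h1 : HasDerivAt (fun x : ℝ => 2*x+4) 2 x := by
    simpa using ((hasDerivAt_id x).const_mul 2).add_const 4
  have h2 : HasDerivAt (fun x : ℝ => x * Real.log x - x + 1)
      ((Real.log x + 1) - 1) x :=
    ((Real.hasDerivAt_mul_log hx.ne').sub (hasDerivAt_id x)).add_const 1
  have h3 : HasDerivAt (fun x : ℝ => 3*(x-1)^2) (3*(2*(x-1)^1*1)) x :=
    (((hasDerivAt_id x).sub_const 1).pow 2).const_mul 3
  have := ((h1.mul h2).sub h3)
  refine this.congr_deriv ?_
  simp only [kfun]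
  ring

private lemma hfun_one : hfun 1 = 0 := by simp [hfun]

private lemma hfun_nonneg {x : ℝ} (hx : 0 < x) : 0 ≤ hfun x := by
  rcases le_total 1 x with h1 | h1
  · have := monotoneOn_of_deriv_nonneg (convex_Icc 1 x) (f := hfun)
      (fun t ht => (hfun_deriv (lt_of_lt_of_le one_pos ht.1)).differentiableAt.continuousAt.continuousWithinAt)
      (by
        intro t ht
        rw [interior_Icc] at ht
        exact (hfun_deriv (lt_of_lt_of_le one_pos ht.1.le)).differentiableAt.differentiableWithinAt)
      (by
        intro t ht
        rw [interior_Icc] at ht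
        rw [(hfun_deriv (lt_of_lt_of_le one_pos ht.1.le)).deriv]
        have := kfun_nonneg ht.1.le
        linarith)
      (Set.left_mem_Icc.2 h1) (Set.right_mem_Icc.2 h1) h1
    rwa [hfun_one] at this
  · have := antitoneOn_of_deriv_nonpos (convex_Icc x 1) (f := hfun)
      (fun t ht => (hfun_deriv (lt_of_lt_of_le hx ht.1)).differentiableAt.continuousAt.continuousWithinAt)
      (by
        intro t ht
        rw [interior_Icc] at ht
        exact (hfun_deriv (lt_of_lt_of_le hx ht.1.le)).differentiableAt.differentiableWithinAt)
      (by
        intro t ht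
        rw [interior_Icc] at ht
        rw [(hfun_deriv (lt_of_lt_of_le hx ht.1.le)).deriv]
        have := kfun_nonpos (lt_of_lt_of_le hx ht.1.le) ht.2.le
        linarith)
      (Set.left_mem_Icc.2 h1) (Set.right_mem_Icc.2 h1) h1
    rwa [hfun_one] at this

private lemma ineqA {t : ℝ} (ht : 0 ≤ t) :
    3*(t-1)^2 ≤ (2*t+4) * (t * Real.log t - t + 1) := by
  rcases eq_or_lt_of_le ht with h0 | h0
  · rw [← h0]; norm_num
  · have := hfun_nonneg h0
    simp only [hfun] at this
    linarith

private lemma ineqB {x y : ℝ} (hx : 0 ≤ x) (hy : 0 ≤ y) (h : x ≠ 0 → y ≠ 0) :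
    3*(x-y)^2 / (2*x+4*y) ≤ x * Real.log (x / y) - x + y := by
  rcases eq_or_lt_of_le hy with hy0 | hy0
  · have hx0 : x = 0 := by
      by_contra hc
      exact (h hc) hy0.symm
    simp [hx0, ← hy0]
  · have hA := ineqA (t := x / y) (by positivity)
    have hxy : x / y * y = x := div_mul_cancel₀ x hy0.ne'
    have hmul := mul_le_mul_of_nonneg_left hA (le_of_lt (show (0:ℝ) < y^2 by positivity))
    have e1 : y^2 * (3*(x/y-1)^2) = 3*(x-y)^2 := by
      field_simp
    have e2 : y^2 * ((2*(x/y)+4) * ((x/y) * Real.log (x/y) - x/y + 1))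
        = (2*x+4*y) * (x * Real.log (x/y) - x + y) := by
      field_simp
    rw [e1, e2] at hmul
    rw [div_le_iff₀ (by positivity : (0:ℝ) < 2*x+4*y)]
    linarith [hmul]

private lemma pinsker {ι : Type*} [Fintype ι] (f g : ι → ℝ)
    (hf : ∀ i, 0 ≤ f i) (hg : ∀ i, 0 ≤ g i)
    (hf1 : ∑ i, f i = 1) (hg1 : ∑ i, g i = 1)
    (habs : ∀ i, g i = 0 → f i = 0) :
    ((1/2) * ∑ i, |f i - g i|) ^ 2 ≤ (1/2) * ∑ i, f i * Real.log (f i / g i) := by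
  set K := ∑ i, f i * Real.log (f i / g i) with hK
  -- step 1 : K = ∑ (f log(f/g) - f + g)
  have step1 : K = ∑ i, (f i * Real.log (f i / g i) - f i + g i) := by
    rw [Finset.sum_add_distrib, Finset.sum_sub_distrib, hf1, hg1]; ring
  -- step 2 : 3S ≤ K
  have step2 : ∑ i, 3*(f i - g i)^2 / (2*f i + 4*g i) ≤ K := by
    rw [step1]
    apply Finset.sum_le_sum
    intro i _
    exact ineqB (hf i) (hg i) (fun hfi => fun hgi => hfi (habs i hgi))
  -- step 3 : Cauchy-Schwarz
  have step3 : (∑ i, |f i - g i|) ^ 2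
      ≤ (∑ i, (f i - g i)^2 / (2*f i + 4*g i)) * 6 := by
    have hcs := Finset.sum_mul_sq_le_sq_mul_sq Finset.univ
      (fun i => |f i - g i| / Real.sqrt (2*f i + 4*g i))
      (fun i => Real.sqrt (2*f i + 4*g i))
    have e1 : ∀ i : ι, |f i - g i| / Real.sqrt (2*f i + 4*g i) * Real.sqrt (2*f i + 4*g i)
        = |f i - g i| := by
      intro i
      rcases eq_or_lt_of_le (show (0:ℝ) ≤ 2*f i + 4*g i by linarith [hf i, hg i]) with h0 | h0
      · have hfi : f i = 0 := by linarith [hf i, hg i]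
        have hgi : g i = 0 := by linarith [hf i, hg i]
        simp [hfi, hgi]
      · exact div_mul_cancel₀ _ (ne_of_gt (Real.sqrt_pos.2 h0))
    have e2 : ∀ i : ι, (|f i - g i| / Real.sqrt (2*f i + 4*g i))^2
        = (f i - g i)^2 / (2*f i + 4*g i) := by
      intro i
      rw [div_pow, sq_abs, Real.sq_sqrt (by linarith [hf i, hg i])]
    have e3 : ∀ i : ι, (Real.sqrt (2*f i + 4*g i))^2 = 2*f i + 4*g i := by
      intro i
      exact Real.sq_sqrt (by linarith [hf i, hg i])
    simp only [e1, e2, e3] at hcs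
    have e4 : ∑ i, (2*f i + 4*g i) = 6 := by
      rw [Finset.sum_add_distrib, ← Finset.mul_sum, ← Finset.mul_sum, hf1, hg1]; norm_num
    rw [e4] at hcs
    exact hcs
  have hS : ∑ i, 3*(f i - g i)^2 / (2*f i + 4*g i)
      = 3 * ∑ i, (f i - g i)^2 / (2*f i + 4*g i) := by
    rw [Finset.mul_sum]
    congr 1; funext i; ring
  rw [hS] at step2
  nlinarith [step3, step2, sq_nonneg (∑ i, |f i - g i|)]


variable (p : σ → α → ζ → υ → ℝ) (s : σ)

private lemma pS_nonneg (hp : ∀ s a z y, 0 ≤ p s a z y) : 0 ≤ pS p s := by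
  unfold pS
  exact Finset.sum_nonneg fun a _ => Finset.sum_nonneg fun z _ =>
    Finset.sum_nonneg fun y _ => hp s a z y

private lemma wZ_nonneg (hp : ∀ s a z y, 0 ≤ p s a z y) (z : ζ) : 0 ≤ wZ p s z := by
  unfold wZ
  exact div_nonneg (Finset.sum_nonneg fun a _ => Finset.sum_nonneg fun y _ => hp s a z y)
    (pS_nonneg p s hp)

private lemma piComp_nonneg (hp : ∀ s a z y, 0 ≤ p s a z y) (z : ζ) (a : α) :
    0 ≤ piComp p s z a := by
  unfold piComp
  exact div_nonneg (Finset.sum_nonneg fun y _ => hp s a z y)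
    (Finset.sum_nonneg fun a' _ => Finset.sum_nonneg fun y _ => hp s a' z y)

private lemma piBar_nonneg (hp : ∀ s a z y, 0 ≤ p s a z y) (a : α) : 0 ≤ piBar p s a :=
  Finset.sum_nonneg fun z _ => mul_nonneg (wZ_nonneg p s hp z) (piComp_nonneg p s hp z a)

private lemma sum_wZ (hs : pS p s ≠ 0) : ∑ z, wZ p s z = 1 := by
  unfold wZ
  rw [← Finset.sum_div]
  rw [show ∑ z, ∑ a, ∑ y, p s a z y = pS p s from by
    unfold pS; rw [Finset.sum_comm]]
  exact div_self hs

private lemma sum_piComp {z : ζ} (hN : (∑ a, ∑ y, p s a z y) ≠ 0) :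
    ∑ a, piComp p s z a = 1 := by
  unfold piComp
  rw [← Finset.sum_div]
  exact div_self hN

private lemma sum_piBar (hp : ∀ s a z y, 0 ≤ p s a z y) (hs : pS p s ≠ 0) :
    ∑ a, piBar p s a = 1 := by
  unfold piBar
  rw [Finset.sum_comm]
  have : ∀ z : ζ, ∑ a, wZ p s z * piComp p s z a = wZ p s z := by
    intro z
    rw [← Finset.mul_sum]
    rcases eq_or_ne (∑ a, ∑ y, p s a z y) 0 with hN | hN
    · have : wZ p s z = 0 := by unfold wZ; rw [hN, zero_div]
      rw [this]; ring
    · rw [sum_piComp p s hN]; ring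
  rw [Finset.sum_congr rfl fun z _ => this z]
  exact sum_wZ p s hs

private lemma part1 (hp : ∀ s a z y, 0 ≤ p s a z y) : DTV p s ≤ (1/2) * miAZ p s := by
  rw [show (1/2 : ℝ) * miAZ p s = ∑ z, wZ p s z *
      ((1/2) * ∑ a, piComp p s z a * Real.log (piComp p s z a / piBar p s a)) from by
    unfold miAZ; rw [Finset.mul_sum]; congr 1; funext z; ring]
  unfold DTV
  apply Finset.sum_le_sum
  intro z _
  rcases eq_or_lt_of_le (wZ_nonneg p s hp z) with hw | hw
  · rw [← hw]; simp
  · apply mul_le_mul_of_nonneg_left _ hw.le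
    have hpS : pS p s ≠ 0 := by
      intro h0
      rw [wZ, h0, div_zero] at hw
      exact lt_irrefl _ hw
    have hN : (∑ a, ∑ y, p s a z y) ≠ 0 := by
      intro h0
      rw [wZ, h0, zero_div] at hw
      exact lt_irrefl _ hw
    have hpin := pinsker (fun a => piComp p s z a) (fun a => piBar p s a)
      (fun a => piComp_nonneg p s hp z a) (fun a => piBar_nonneg p s hp a)
      (sum_piComp p s hN) (sum_piBar p s hp hpS)
      (by
        intro a hbar
        have hterm : wZ p s z * piComp p s z a = 0 := by
          have hb : ∑ z', wZ p s z' * piComp p s z' a = 0 := hbar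
          have := (Finset.sum_eq_zero_iff_of_nonneg (s := (Finset.univ : Finset ζ))
            (f := fun z' => wZ p s z' * piComp p s z' a) (fun z' _ =>
            mul_nonneg (wZ_nonneg p s hp z') (piComp_nonneg p s hp z' a))).1 hb
          exact this z (Finset.mem_univ z)
        rcases mul_eq_zero.1 hterm with h | h
        · exact absurd h hw.ne'
        · exact h)
    unfold tvComp
    exact hpin


private noncomputable def rr (p : σ → α → ζ → υ → ℝ) (s : σ) (a : α) (z : ζ) (y : υ) : ℝ :=
  p s a z y / pS p s
private noncomputable def mAZ (p : σ → α → ζ → υ → ℝ) (s : σ) (a : α) (z : ζ) : ℝ :=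
  ∑ y, rr p s a z y
private noncomputable def mAY (p : σ → α → ζ → υ → ℝ) (s : σ) (a : α) (y : υ) : ℝ :=
  ∑ z, rr p s a z y
private noncomputable def mZY (p : σ → α → ζ → υ → ℝ) (s : σ) (z : ζ) (y : υ) : ℝ :=
  ∑ a, rr p s a z y
private noncomputable def mA (p : σ → α → ζ → υ → ℝ) (s : σ) (a : α) : ℝ :=
  ∑ z, ∑ y, rr p s a z y
private noncomputable def mY (p : σ → α → ζ → υ → ℝ) (s : σ) (y : υ) : ℝ :=
  ∑ a, ∑ z, rr p s a z y
private noncomputable def mZ (p : σ → α → ζ → υ → ℝ) (s : σ) (z : ζ) : ℝ :=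
  ∑ a, ∑ y, rr p s a z y

section marg
variable (hp : ∀ s a z y, 0 ≤ p s a z y)
include hp

private lemma rr_nonneg (a : α) (z : ζ) (y : υ) : 0 ≤ rr p s a z y :=
  div_nonneg (hp s a z y) (pS_nonneg p s hp)

private lemma le_mAZ (a : α) (z : ζ) (y : υ) : rr p s a z y ≤ mAZ p s a z :=
  Finset.single_le_sum (fun y' _ => rr_nonneg p s hp a z y') (Finset.mem_univ y)

private lemma le_mAY (a : α) (z : ζ) (y : υ) : rr p s a z y ≤ mAY p s a y :=
  Finset.single_le_sum (fun z' _ => rr_nonneg p s hp a z' y) (Finset.mem_univ z)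

private lemma le_mZY (a : α) (z : ζ) (y : υ) : rr p s a z y ≤ mZY p s z y :=
  Finset.single_le_sum (fun a' _ => rr_nonneg p s hp a' z y) (Finset.mem_univ a)

private lemma mAZ_nonneg (a : α) (z : ζ) : 0 ≤ mAZ p s a z :=
  Finset.sum_nonneg fun y _ => rr_nonneg p s hp a z y
private lemma mAY_nonneg (a : α) (y : υ) : 0 ≤ mAY p s a y :=
  Finset.sum_nonneg fun z _ => rr_nonneg p s hp a z y
private lemma mZY_nonneg (z : ζ) (y : υ) : 0 ≤ mZY p s z y :=
  Finset.sum_nonneg fun a _ => rr_nonneg p s hp a z y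
private lemma mA_nonneg (a : α) : 0 ≤ mA p s a :=
  Finset.sum_nonneg fun z _ => Finset.sum_nonneg fun y _ => rr_nonneg p s hp a z y
private lemma mY_nonneg (y : υ) : 0 ≤ mY p s y :=
  Finset.sum_nonneg fun a _ => Finset.sum_nonneg fun z _ => rr_nonneg p s hp a z y
private lemma mZ_nonneg (z : ζ) : 0 ≤ mZ p s z :=
  Finset.sum_nonneg fun a _ => Finset.sum_nonneg fun y _ => rr_nonneg p s hp a z y

private lemma le_mA (a : α) (z : ζ) (y : υ) : rr p s a z y ≤ mA p s a :=
  le_trans (le_mAZ p s hp a z y)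
    (Finset.single_le_sum (fun z' _ => mAZ_nonneg p s hp a z') (Finset.mem_univ z))

private lemma le_mY (a : α) (z : ζ) (y : υ) : rr p s a z y ≤ mY p s y :=
  le_trans (le_mAY p s hp a z y)
    (Finset.single_le_sum (f := fun a' => mAY p s a' y)
      (fun a' _ => mAY_nonneg p s hp a' y) (Finset.mem_univ a))

private lemma le_mZ (a : α) (z : ζ) (y : υ) : rr p s a z y ≤ mZ p s z :=
  le_trans (le_mAZ p s hp a z y)
    (Finset.single_le_sum (f := fun a' => mAZ p s a' z)
      (fun a' _ => mAZ_nonneg p s hp a' z) (Finset.mem_univ a))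

end marg

private lemma pS_zero (hp : ∀ s a z y, 0 ≤ p s a z y) (hT : pS p s = 0) :
    ∀ a z y, p s a z y = 0 := by
  intro a z y
  have h1 := (Finset.sum_eq_zero_iff_of_nonneg (s := (Finset.univ : Finset α))
    (f := fun a => ∑ z, ∑ y, p s a z y)
    (fun a _ => Finset.sum_nonneg fun z _ => Finset.sum_nonneg fun y _ => hp s a z y)).1 hT
    a (Finset.mem_univ a)
  have h2 := (Finset.sum_eq_zero_iff_of_nonneg (s := (Finset.univ : Finset ζ))
    (f := fun z => ∑ y, p s a z y)
    (fun z _ => Finset.sum_nonneg fun y _ => hp s a z y)).1 h1 z (Finset.mem_univ z)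
  exact (Finset.sum_eq_zero_iff_of_nonneg (s := (Finset.univ : Finset υ))
    (f := fun y => p s a z y) (fun y _ => hp s a z y)).1 h2 y (Finset.mem_univ y)

private lemma hpiBar (hp : ∀ s a z y, 0 ≤ p s a z y) (a : α) :
    piBar p s a = mA p s a := by
  unfold piBar mA
  apply Finset.sum_congr rfl
  intro z _
  have hrr : ∑ y, rr p s a z y = (∑ y, p s a z y) / pS p s := by
    simp [rr, Finset.sum_div]
  rw [hrr]
  unfold wZ piComp
  rcases eq_or_ne (∑ a', ∑ y, p s a' z y) 0 with hN | hN
  · have hM : (∑ y, p s a z y) = 0 := by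
      have := (Finset.sum_eq_zero_iff_of_nonneg (s := (Finset.univ : Finset α))
        (f := fun a' => ∑ y, p s a' z y)
        (fun a' _ => Finset.sum_nonneg fun y _ => hp s a' z y)).1 hN
      exact this a (Finset.mem_univ a)
    rw [hN, hM]; simp
  · rw [div_mul_div_comm, mul_comm (pS p s), mul_div_mul_left _ _ hN]

private lemma B1 (hp : ∀ s a z y, 0 ≤ p s a z y) :
    miAZ p s = ∑ z, ∑ a, mAZ p s a z *
      Real.log (mAZ p s a z / (mA p s a * mZ p s z)) := by
  unfold miAZ
  simp only [Finset.mul_sum]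
  apply Finset.sum_congr rfl
  intro z _
  apply Finset.sum_congr rfl
  intro a _
  have hmAZ : mAZ p s a z = (∑ y, p s a z y) / pS p s := by
    simp [mAZ, rr, Finset.sum_div]
  have hmZ : mZ p s z = (∑ a', ∑ y, p s a' z y) / pS p s := by
    simp [mZ, rr, Finset.sum_div]
  rcases eq_or_ne (∑ a', ∑ y, p s a' z y) 0 with hN | hN
  · have hM : (∑ y, p s a z y) = 0 := by
      have := (Finset.sum_eq_zero_iff_of_nonneg (s := (Finset.univ : Finset α))
        (f := fun a' => ∑ y, p s a' z y)
        (fun a' _ => Finset.sum_nonneg fun y _ => hp s a' z y)).1 hN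
      exact this a (Finset.mem_univ a)
    rw [hmAZ, hM]
    unfold wZ
    rw [hN]
    simp
  · rcases eq_or_ne (∑ y, p s a z y) 0 with hM | hM
    · rw [hmAZ, hM]
      unfold piComp
      rw [hM]
      simp
    · have hco : wZ p s z * piComp p s z a = mAZ p s a z := by
        rw [hmAZ]
        unfold wZ piComp
        rw [div_mul_div_comm, mul_comm (pS p s), mul_div_mul_left _ _ hN]
      have harg : piComp p s z a / piBar p s a
          = mAZ p s a z / (mA p s a * mZ p s z) := by
        rw [← hpiBar p s hp a]
        rcases eq_or_ne (piBar p s a) 0 with hA | hA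
        · rw [hA]; simp
        · rcases eq_or_ne (pS p s) 0 with hT | hT
          · exact absurd (Finset.sum_eq_zero fun y _ => pS_zero p s hp hT a z y) hM
          · rw [hmAZ, hmZ]
            unfold piComp
            field_simp
            try ring_nf
            try tauto
      rw [← mul_assoc, hco, harg]

private lemma B2 :
    miAY p s = ∑ a, ∑ y, mAY p s a y *
      Real.log (mAY p s a y / (mA p s a * mY p s y)) := by
  unfold miAY mi
  apply Finset.sum_congr rfl
  intro a _
  apply Finset.sum_congr rfl
  intro y _
  have h1 : mAY p s a y = (∑ z, p s a z y) / pS p s := by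
    simp [mAY, rr, Finset.sum_div]
  have h2 : mA p s a = ∑ y', (∑ z, p s a z y') / pS p s := by
    simp only [mA, rr, Finset.sum_div]
    rw [Finset.sum_comm]
  have h3 : mY p s y = ∑ a', (∑ z, p s a' z y) / pS p s := by
    simp [mY, rr, Finset.sum_div]
  rw [h1, h2, h3]

private lemma B3 (hp : ∀ s a z y, 0 ≤ p s a z y) :
    miAZgY p s = ∑ y, ∑ a, ∑ z, rr p s a z y *
      Real.log (rr p s a z y * mY p s y / (mAY p s a y * mZY p s z y)) := by
  unfold miAZgY mi
  apply Finset.sum_congr rfl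
  intro y _
  rcases eq_or_ne (∑ a, ∑ z, p s a z y) 0 with hD0 | hD0
  · have hzero : ∀ a z, p s a z y = 0 := by
      intro a z
      have h1 := (Finset.sum_eq_zero_iff_of_nonneg (s := (Finset.univ : Finset α))
        (f := fun a => ∑ z, p s a z y)
        (fun a _ => Finset.sum_nonneg fun z _ => hp s a z y)).1 hD0 a (Finset.mem_univ a)
      exact (Finset.sum_eq_zero_iff_of_nonneg (s := (Finset.univ : Finset ζ))
        (f := fun z => p s a z y) (fun z _ => hp s a z y)).1 h1 z (Finset.mem_univ z)
    simp [hD0, rr, hzero]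
  · rw [Finset.mul_sum]
    apply Finset.sum_congr rfl
    intro a _
    rw [Finset.mul_sum]
    apply Finset.sum_congr rfl
    intro z _
    have hco : (∑ a, ∑ z, p s a z y) / pS p s * (p s a z y / (∑ a', ∑ z', p s a' z' y))
        = rr p s a z y := by
      unfold rr
      rw [div_mul_div_comm, mul_comm (pS p s), mul_div_mul_left _ _ hD0]
    have h1 : (∑ z', p s a z' y / (∑ a', ∑ z', p s a' z' y))
        = (∑ z', p s a z' y) / (∑ a', ∑ z', p s a' z' y) := (Finset.sum_div _ _ _).symm
    have h2 : (∑ a', p s a' z y / (∑ a'', ∑ z', p s a'' z' y))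
        = (∑ a', p s a' z y) / (∑ a', ∑ z', p s a' z' y) := (Finset.sum_div _ _ _).symm
    have hmAY : mAY p s a y = (∑ z', p s a z' y) / pS p s := by
      simp [mAY, rr, Finset.sum_div]
    have hmZY : mZY p s z y = (∑ a', p s a' z y) / pS p s := by
      simp [mZY, rr, Finset.sum_div]
    have hmY : mY p s y = (∑ a, ∑ z, p s a z y) / pS p s := by
      simp [mY, rr, Finset.sum_div]
    rw [h1, h2, hmAY, hmZY, hmY]
    have harg : p s a z y / (∑ a', ∑ z', p s a' z' y) /
          ((∑ z', p s a z' y) / (∑ a', ∑ z', p s a' z' y) *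
           ((∑ a', p s a' z y) / (∑ a', ∑ z', p s a' z' y)))
        = rr p s a z y * ((∑ a, ∑ z, p s a z y) / pS p s) /
          ((∑ z', p s a z' y) / pS p s * ((∑ a', p s a' z y) / pS p s)) := by
      rcases eq_or_ne (∑ z', p s a z' y) 0 with hPA | hPA
      · rw [hPA]; simp
      · rcases eq_or_ne (∑ a', p s a' z y) 0 with hPZ | hPZ
        · rw [hPZ]; simp
        · rcases eq_or_ne (pS p s) 0 with hT | hT
          · exact absurd (Finset.sum_eq_zero fun z' _ => pS_zero p s hp hT a z' y) hPA
          · unfold rr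
            field_simp
            try ring_nf
            try tauto
    rw [← mul_assoc, hco, harg]


private lemma chain (hp : ∀ s a z y, 0 ≤ p s a z y) :
    miAZ p s ≤ miAY p s + miAZgY p s := by
  have E1 : miAZ p s = ∑ a, ∑ z, ∑ y, rr p s a z y *
      Real.log (mAZ p s a z / (mA p s a * mZ p s z)) := by
    rw [B1 p s hp, Finset.sum_comm]
    apply Finset.sum_congr rfl
    intro a _
    apply Finset.sum_congr rfl
    intro z _
    rw [mAZ, Finset.sum_mul]
  have E2 : miAY p s = ∑ a, ∑ z, ∑ y, rr p s a z y *
      Real.log (mAY p s a y / (mA p s a * mY p s y)) := by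
    rw [B2 p s]
    apply Finset.sum_congr rfl
    intro a _
    rw [Finset.sum_comm]
    apply Finset.sum_congr rfl
    intro y _
    rw [mAY, Finset.sum_mul]
  have E3 : miAZgY p s = ∑ a, ∑ z, ∑ y, rr p s a z y *
      Real.log (rr p s a z y * mY p s y / (mAY p s a y * mZY p s z y)) := by
    rw [B3 p s hp, Finset.sum_comm]
    apply Finset.sum_congr rfl
    intro a _
    rw [Finset.sum_comm]
  have E4nn : 0 ≤ ∑ a, ∑ z, ∑ y, rr p s a z y *
      Real.log (rr p s a z y / (mAZ p s a z * mZY p s z y / mZ p s z)) := by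
    rw [Finset.sum_comm]
    apply Finset.sum_nonneg
    intro z _
    have hsZ1 : ∑ a, mAZ p s a z = mZ p s z := rfl
    have hsZ2 : ∑ y, mZY p s z y = mZ p s z := by
      unfold mZY mZ
      rw [Finset.sum_comm]
    have hg := gibbs_sum (ι := α × υ) (fun i => rr p s i.1 z i.2)
      (fun i => mAZ p s i.1 z * mZY p s z i.2 / mZ p s z)
      (fun i => rr_nonneg p s hp i.1 z i.2)
      (fun i => div_nonneg (mul_nonneg (mAZ_nonneg p s hp i.1 z)
        (mZY_nonneg p s hp z i.2)) (mZ_nonneg p s hp z))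
      (by
        intro i hi
        have hr : 0 < rr p s i.1 z i.2 :=
          lt_of_le_of_ne (rr_nonneg p s hp i.1 z i.2) (Ne.symm hi)
        have h1 : 0 < mAZ p s i.1 z := lt_of_lt_of_le hr (le_mAZ p s hp i.1 z i.2)
        have h2 : 0 < mZY p s z i.2 := lt_of_lt_of_le hr (le_mZY p s hp i.1 z i.2)
        have h3 : 0 < mZ p s z := lt_of_lt_of_le hr (le_mZ p s hp i.1 z i.2)
        exact ne_of_gt (div_pos (mul_pos h1 h2) h3))
      (by
        rw [Fintype.sum_prod_type, Fintype.sum_prod_type]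
        have e1 : ∀ a : α, ∑ y, mAZ p s a z * mZY p s z y / mZ p s z
            = mAZ p s a z * mZ p s z / mZ p s z := by
          intro a
          rw [← Finset.sum_div, ← Finset.mul_sum, hsZ2]
        rw [Finset.sum_congr rfl fun a _ => e1 a]
        have e2 : ∑ a, mAZ p s a z * mZ p s z / mZ p s z
            = mZ p s z * mZ p s z / mZ p s z := by
          rw [← Finset.sum_div, ← Finset.sum_mul, hsZ1]
        rw [e2]
        have e3 : ∑ a, ∑ y, rr p s a z y = mZ p s z := rfl
        rw [e3]
        rcases eq_or_ne (mZ p s z) 0 with h0 | h0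
        · rw [h0]; simp
        · rw [mul_div_assoc, div_self h0, mul_one])
    rw [Fintype.sum_prod_type] at hg
    exact hg
  have key : ∀ (a : α) (z : ζ) (y : υ),
      rr p s a z y * Real.log (mAY p s a y / (mA p s a * mY p s y)) +
      rr p s a z y * Real.log (rr p s a z y * mY p s y / (mAY p s a y * mZY p s z y)) -
      rr p s a z y * Real.log (mAZ p s a z / (mA p s a * mZ p s z)) =
      rr p s a z y * Real.log (rr p s a z y / (mAZ p s a z * mZY p s z y / mZ p s z)) := by
    intro a z y
    rcases eq_or_lt_of_le (rr_nonneg p s hp a z y) with hr | hr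
    · rw [← hr]
      simp
    · have h1 : 0 < mAZ p s a z := lt_of_lt_of_le hr (le_mAZ p s hp a z y)
      have h2 : 0 < mAY p s a y := lt_of_lt_of_le hr (le_mAY p s hp a z y)
      have h3 : 0 < mZY p s z y := lt_of_lt_of_le hr (le_mZY p s hp a z y)
      have h4 : 0 < mA p s a := lt_of_lt_of_le hr (le_mA p s hp a z y)
      have h5 : 0 < mY p s y := lt_of_lt_of_le hr (le_mY p s hp a z y)
      have h6 : 0 < mZ p s z := lt_of_lt_of_le hr (le_mZ p s hp a z y)
      have hlog : Real.log (mAY p s a y / (mA p s a * mY p s y)) +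
          Real.log (rr p s a z y * mY p s y / (mAY p s a y * mZY p s z y)) -
          Real.log (mAZ p s a z / (mA p s a * mZ p s z)) =
          Real.log (rr p s a z y / (mAZ p s a z * mZY p s z y / mZ p s z)) := by
        rw [Real.log_div h2.ne' (mul_pos h4 h5).ne',
          Real.log_div (mul_pos hr h5).ne' (mul_pos h2 h3).ne',
          Real.log_div h1.ne' (mul_pos h4 h6).ne',
          Real.log_div hr.ne' (ne_of_gt (div_pos (mul_pos h1 h3) h6)),
          Real.log_div (mul_pos h1 h3).ne' h6.ne',
          Real.log_mul h4.ne' h5.ne', Real.log_mul hr.ne' h5.ne',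
          Real.log_mul h2.ne' h3.ne', Real.log_mul h4.ne' h6.ne',
          Real.log_mul h1.ne' h3.ne']
        ring
      rw [← mul_add, ← mul_sub, ← hlog, mul_sub, mul_add]
  have comb : miAY p s + miAZgY p s - miAZ p s = ∑ a, ∑ z, ∑ y, rr p s a z y *
      Real.log (rr p s a z y / (mAZ p s a z * mZY p s z y / mZ p s z)) := by
    rw [E1, E2, E3]
    simp only [← Finset.sum_add_distrib, ← Finset.sum_sub_distrib]
    exact Finset.sum_congr rfl fun a _ => Finset.sum_congr rfl fun z _ =>
      Finset.sum_congr rfl fun y _ => key a z y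
  linarith [E4nn, comb]


/-- **Expressivity Theorem, total variation case.**
For each state `s`, with weights `w_i(s)`, component distributions `π_i^s` and mixture
`π̄^s`, the TV divergence satisfies `D_TV(Z|s) ≤ (1/2) I(A; Z | S = s)`.  Consequently, if
additionally `I(A; Z | Ỹ, S = s) = 0` for every `s`, then
`E_{S∼d_π}[D_TV(Z|S)] ≤ (1/2) I(A; Z | S) ≤ (1/2) I(A; Ỹ | S)`. -/
theorem stmt15 (p : σ → α → ζ → υ → ℝ)
    (hp : ∀ s a z y, 0 ≤ p s a z y)
    (hpsum : ∑ s, ∑ a, ∑ z, ∑ y, p s a z y = 1) :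
    (∀ s, DTV p s ≤ (1 / 2) * miAZ p s) ∧
      ((∀ s, miAZgY p s = 0) →
        (∑ s, pS p s * DTV p s) ≤ (1 / 2) * (∑ s, pS p s * miAZ p s) ∧
          (1 / 2) * (∑ s, pS p s * miAZ p s) ≤ (1 / 2) * ∑ s, pS p s * miAY p s) := by
  refine ⟨fun s => part1 p s hp, fun h0 => ⟨?_, ?_⟩⟩
  · rw [Finset.mul_sum]
    apply Finset.sum_le_sum
    intro s _
    calc pS p s * DTV p s ≤ pS p s * ((1/2) * miAZ p s) :=
          mul_le_mul_of_nonneg_left (part1 p s hp) (pS_nonneg p s hp)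
      _ = 1/2 * (pS p s * miAZ p s) := by ring
  · apply mul_le_mul_of_nonneg_left _ (by norm_num : (0:ℝ) ≤ 1/2)
    apply Finset.sum_le_sum
    intro s _
    have hc := chain p s hp
    rw [h0 s, add_zero] at hc
    exact mul_le_mul_of_nonneg_left hc (pS_nonneg p s hp)

end Expressivity
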